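/- Let G be a graph of diameter two, {x,y} a two-vertex cut of G, and call a vertex of G − {x,y} strong if it is adjacent to both x and y. Then any two strong vertices lying in the same connected component of G − {x,y} need not be adjacent in general, but if additionally G is 3-γₜ-edge-critical and G − {x,y} has at least two components, then any two strong vertices in the same component of G − {x,y} are adjacent. -/

import Mathlib

/-- The total domination number of a graph, as an extended natural number
(`⊤` when no total dominating set exists). -/
noncomputable def gammaT {V : Type*} (G : SimpleGraph V) : ℕ∞ :=
  sInf {n : ℕ∞ | ∃ S : Finset V, (S.card : ℕ∞) = n ∧ ∀ v : V, ∃ u ∈ S, G.Adj v u}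

/-- G has diameter two. -/
def DiamTwo {V : Type*} (G : SimpleGraph V) : Prop :=
  (∀ u v : V, u ≠ v → G.Adj u v ∨ ∃ w : V, G.Adj u w ∧ G.Adj w v) ∧
    ∃ u v : V, u ≠ v ∧ ¬ G.Adj u v

/-- Removing the vertex set S disconnects G. -/
def RemovalDisconnects {V : Type*} (G : SimpleGraph V) (S : Set V) : Prop :=
  ∃ a b : (Sᶜ : Set V), ¬ (G.induce Sᶜ).Reachable a b

/-- G is 3-γₜ-edge-critical. -/
def Critical3 {V : Type*} [DecidableEq V] (G : SimpleGraph V) : Prop :=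
  gammaT G = 3 ∧
    ∀ u v : V, u ≠ v → ¬ G.Adj u v →
      gammaT (G ⊔ SimpleGraph.fromEdgeSet {s(u, v)}) = 2

/-!
Suppose two strong vertices `v, v'` of a component `C` of `G - {x, y}` are not adjacent. By
criticality `G + vv'` has a total dominating set `S` with `|S| = 2`, and since `γₜ(G) = 3` some
vertex, say `v`, is dominated only through the new edge: `v' ∈ S` and `v` has no neighbour in `S`
in `G`. As `v` is adjacent to `x` and `y`, neither lies in `S`. A vertex `w` outside `C` is then
dominated by the other element `u` of `S`, which lies in the component of `w`; but `v'` must also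
be dominated by `u`, which puts `u` in `C`.
-/

open SimpleGraph

section

variable {V : Type*} {G : SimpleGraph V}

def IsTotalDominating (G : SimpleGraph V) (S : Finset V) : Prop :=
  ∀ v, ∃ u ∈ S, G.Adj v u

lemma gammaT_le_card {S : Finset V} (hS : IsTotalDominating G S) : gammaT G ≤ S.card :=
  sInf_le ⟨S, rfl, hS⟩

lemma exists_isTotalDominating_card_eq_gammaT (h : gammaT G ≠ ⊤) :
    ∃ S : Finset V, IsTotalDominating G S ∧ (S.card : ℕ∞) = gammaT G := by
  have hne : {n : ℕ∞ | ∃ S : Finset V, (S.card : ℕ∞) = n ∧ IsTotalDominating G S}.Nonempty :=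
    Set.nonempty_iff_ne_empty.2 fun he => h (by rw [gammaT]; exact he ▸ sInf_empty)
  obtain ⟨S, hcard, hS⟩ := csInf_mem hne
  exact ⟨S, hS, hcard⟩

lemma adj_of_sup_edge_adj {a b c d : V} (h : (G ⊔ edge a b).Adj c d) (hca : c ≠ a)
    (hcb : c ≠ b) : G.Adj c d := by
  rcases h with h | h
  · exact h
  · rw [edge_adj] at h
    rcases h.1 with ⟨rfl, -⟩ | ⟨rfl, -⟩ <;> contradiction

lemma IsTotalDominating.exists_of_sup_edge {S : Finset V} {a b : V}
    (hS : IsTotalDominating (G ⊔ edge a b) S) (hG : ¬ IsTotalDominating G S) :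
    ∃ p q, s(p, q) = s(a, b) ∧ q ∈ S ∧ ∀ u ∈ S, ¬ G.Adj p u := by
  unfold IsTotalDominating at hG
  push Not at hG
  obtain ⟨p, hp⟩ := hG
  obtain ⟨q, hqS, hpq⟩ := hS p
  rcases hpq with hpq | hpq
  · exact absurd hpq (hp q hqS)
  · exact ⟨p, q, ((adj_edge _ _).1 hpq).1.symm, hqS, hp⟩

lemma not_isTotalDominating_sup_edge {s : Set V} {p q w : s} {S : Finset V}
    (hpq : (G.induce s).Reachable p q) (hpw : ¬ (G.induce s).Reachable p w)
    (hp : ∀ t ∉ s, G.Adj p t) (hcard : S.card ≤ 2) (hqS : (q : V) ∈ S)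
    (hpS : ∀ u ∈ S, ¬ G.Adj p u) : ¬ IsTotalDominating (G ⊔ edge p q) S := by
  intro hS
  obtain ⟨u, huS, hwu⟩ := hS w
  have hus : u ∈ s := by
    by_contra hu
    exact hpS u huS (hp u hu)
  have hwp : w ≠ p := fun h => hpw (h ▸ .rfl)
  have hwq : w ≠ q := fun h => hpw (h ▸ hpq)
  have hwu : (G.induce s).Reachable w ⟨u, hus⟩ :=
    (induce_adj.2 (adj_of_sup_edge_adj hwu (Subtype.coe_ne_coe.2 hwp)
      (Subtype.coe_ne_coe.2 hwq))).reachable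
  have hup : (⟨u, hus⟩ : s) ≠ p := fun h => hpw (h ▸ hwu.symm)
  have huq : (⟨u, hus⟩ : s) ≠ q := fun h => hpw (hpq.trans (h ▸ hwu.symm))
  obtain ⟨r, hrS, hqr⟩ := hS q
  have hru : r = u := by
    by_contra hru
    have : 2 < S.card := Finset.two_lt_card.2
      ⟨q, hqS, u, huS, r, hrS, Subtype.coe_ne_coe.2 huq.symm, hqr.ne, Ne.symm hru⟩
    omega
  subst hru
  have hqu : (G.induce s).Reachable q ⟨r, hus⟩ :=
    (induce_adj.2 (adj_of_sup_edge_adj hqr.symm (Subtype.coe_ne_coe.2 hup)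
      (Subtype.coe_ne_coe.2 huq)).symm).reachable
  exact hpw (hpq.trans (hqu.trans hwu.symm))

end

theorem stmt13_general {V : Type*} [DecidableEq V] (G : SimpleGraph V)
    (hcrit : Critical3 G)
    (x y : V) (hcut : RemovalDisconnects G {x, y}) :
    ∀ (v v' : V) (hv : v ∈ (({x, y} : Set V)ᶜ)) (hv' : v' ∈ (({x, y} : Set V)ᶜ)),
      v ≠ v' →
      G.Adj x v → G.Adj y v → G.Adj x v' → G.Adj y v' →
      (G.induce (({x, y} : Set V)ᶜ)).Reachable ⟨v, hv⟩ ⟨v', hv'⟩ →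
      G.Adj v v' := by
  intro v v' hv hv' hne hxv hyv hxv' hyv' hreach
  by_contra hvv'
  have h2 : gammaT (G ⊔ edge v v') = 2 := hcrit.2 v v' hne hvv'
  obtain ⟨S, hS, hSγ⟩ := exists_isTotalDominating_card_eq_gammaT (G := G ⊔ edge v v')
    (by rw [h2]; decide)
  have hS2 : (S.card : ℕ∞) = 2 := hSγ.trans h2
  have hcard : S.card ≤ 2 := by exact_mod_cast hS2.le
  have hG : ¬ IsTotalDominating G S := fun hG =>
    (gammaT_le_card hG).not_gt (by rw [hcrit.1, hS2]; decide)
  obtain ⟨p, q, hpq, hqS, hpS⟩ := hS.exists_of_sup_edge hG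
  obtain ⟨w, hw⟩ : ∃ w, ¬ (G.induce ({x, y} : Set V)ᶜ).Reachable ⟨v, hv⟩ w := by
    obtain ⟨a, b, hab⟩ := hcut
    by_contra! h
    exact hab ((h a).symm.trans (h b))
  have hstrong : ∀ t ∉ ({x, y} : Set V)ᶜ, G.Adj v t ∧ G.Adj v' t := by
    intro t ht
    rcases not_not.1 ht with rfl | rfl
    exacts [⟨hxv.symm, hxv'.symm⟩, ⟨hyv.symm, hyv'.symm⟩]
  rcases Sym2.eq_iff.1 hpq with ⟨rfl, rfl⟩ | ⟨rfl, rfl⟩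
  · exact not_isTotalDominating_sup_edge hreach hw (fun t ht => (hstrong t ht).1) hcard hqS hpS hS
  · rw [edge_comm] at hS
    exact not_isTotalDominating_sup_edge hreach.symm (fun h => hw (hreach.trans h))
      (fun t ht => (hstrong t ht).2) hcard hqS hpS hS

/-- In a 3-γₜ-edge-critical diameter-two graph with a
two-vertex cut {x,y}, any two strong vertices (adjacent to both x and y)
lying in the same component of G - {x,y} are adjacent. -/
theorem stmt13 {V : Type*} [DecidableEq V] (G : SimpleGraph V)
    (hcrit : Critical3 G) (hconn : G.Connected) (hdiam : DiamTwo G)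
    (x y : V) (hxy : x ≠ y) (hcut : RemovalDisconnects G {x, y}) :
    ∀ (v v' : V) (hv : v ∈ (({x, y} : Set V)ᶜ)) (hv' : v' ∈ (({x, y} : Set V)ᶜ)),
      v ≠ v' →
      G.Adj x v → G.Adj y v → G.Adj x v' → G.Adj y v' →
      (G.induce (({x, y} : Set V)ᶜ)).Reachable ⟨v, hv⟩ ⟨v', hv'⟩ →
      G.Adj v v' :=
  stmt13_general G hcrit x y hcut
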